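/- In the group G₁ presented by generators a, b, c and relators a², b², c², (abc)², the subgroup H₁ generated by the elements bc and ba is a normal abelian subgroup of G₁, and the quotient group G₁/H₁ has at most 2 elements (it is generated by the image of b, whose square is trivial). -/
import Mathlib

set_option maxHeartbeats 1000000 in
/-- In `G₁ = ⟨a, b, c | a² = b² = c² = (abc)² = 1⟩`, the subgroup `H₁`
generated by `bc` and `ba` is a normal abelian subgroup of `G₁`, and the quotient
`G₁/H₁` has at most 2 elements: every coset is the coset of `1` or of `b`. -/
theorem stmt_7 :
    let G₁ := PresentedGroup
      ({FreeGroup.of 0 ^ 2, FreeGroup.of 1 ^ 2, FreeGroup.of 2 ^ 2,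
        (FreeGroup.of 0 * FreeGroup.of 1 * FreeGroup.of 2) ^ 2} :
        Set (FreeGroup (Fin 3)))
    let b : G₁ := PresentedGroup.of 1
    let H₁ : Subgroup G₁ :=
      Subgroup.closure {PresentedGroup.of 1 * PresentedGroup.of 2,
        PresentedGroup.of 1 * PresentedGroup.of 0}
    H₁.Normal ∧
    (∀ x ∈ H₁, ∀ y ∈ H₁, x * y = y * x) ∧
    Nat.card (G₁ ⧸ H₁) ≤ 2 ∧
    (∀ x : G₁ ⧸ H₁, x = ((1 : G₁) : G₁ ⧸ H₁) ∨ x = (b : G₁ ⧸ H₁)) := by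
  intro G₁ b H₁
  set rels : Set (FreeGroup (Fin 3)) := {FreeGroup.of 0 ^ 2, FreeGroup.of 1 ^ 2,
    FreeGroup.of 2 ^ 2, (FreeGroup.of 0 * FreeGroup.of 1 * FreeGroup.of 2) ^ 2} with hrels
  have hone : ∀ r ∈ rels, PresentedGroup.mk rels r = 1 := fun r hr =>
    (QuotientGroup.eq_one_iff _).2 (Subgroup.subset_normalClosure hr)
  set a : G₁ := PresentedGroup.of 0 with hadef
  set c : G₁ := PresentedGroup.of 2 with hcdef
  have ha : a * a = 1 := by
    have := hone _ (by simp [hrels] : FreeGroup.of 0 ^ 2 ∈ rels)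
    simpa [sq, hadef, PresentedGroup.of, map_mul] using this
  have hb : b * b = 1 := by
    have := hone _ (by simp [hrels] : FreeGroup.of 1 ^ 2 ∈ rels)
    simpa [sq, b, PresentedGroup.of, map_mul] using this
  have hc : c * c = 1 := by
    have := hone _ (by simp [hrels] : FreeGroup.of 2 ^ 2 ∈ rels)
    simpa [sq, hcdef, PresentedGroup.of, map_mul] using this
  have habc : (a * b * c) * (a * b * c) = 1 := by
    have := hone _ (by simp [hrels] :
      (FreeGroup.of 0 * FreeGroup.of 1 * FreeGroup.of 2) ^ 2 ∈ rels)
    simpa [sq, hadef, b, hcdef, PresentedGroup.of, map_mul] using this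
  have hainv : a⁻¹ = a := inv_eq_of_mul_eq_one_right ha
  have hbinv : b⁻¹ = b := inv_eq_of_mul_eq_one_right hb
  have hcinv : c⁻¹ = c := inv_eq_of_mul_eq_one_right hc
  -- key relation: a*b*c = c*b*a
  have hkey : a * b * c = c * b * a := by
    have h1 : (a * b * c)⁻¹ = a * b * c := inv_eq_of_mul_eq_one_right habc
    calc a * b * c = (a * b * c)⁻¹ := h1.symm
      _ = c⁻¹ * (b⁻¹ * a⁻¹) := by group
      _ = c * (b * a) := by rw [hainv, hbinv, hcinv]
      _ = c * b * a := (mul_assoc c b a).symm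
  -- generators of H₁
  set x : G₁ := b * c with hx
  set y : G₁ := b * a with hy
  have hS : ({PresentedGroup.of 1 * PresentedGroup.of 2,
      PresentedGroup.of 1 * PresentedGroup.of 0} : Set G₁) = {x, y} := rfl
  have hxmem : x ∈ H₁ := Subgroup.subset_closure (by left; rfl)
  have hymem : y ∈ H₁ := Subgroup.subset_closure (by right; rfl)
  have hxinv : x⁻¹ = c * b := by rw [hx, mul_inv_rev, hbinv, hcinv]
  have hyinv : y⁻¹ = a * b := by rw [hy, mul_inv_rev, hbinv, hainv]
  -- commutation of the generators: x*y = y*x  ⟺  c*b*a = a*b*c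
  have hcomm : x * y = y * x := by
    rw [hx, hy]
    calc b * c * (b * a) = b * (c * b * a) := by group
      _ = b * (a * b * c) := by rw [← hkey]
      _ = b * a * (b * c) := by group
  -- conjugation by b maps H₁ into H₁
  have hbx : b * x * b⁻¹ = x⁻¹ := by
    rw [hbinv, hx, hxinv]
    calc b * (b * c) * b = (b * b) * (c * b) := by group
      _ = c * b := by rw [hb, one_mul]
  have hby : b * y * b⁻¹ = y⁻¹ := by
    rw [hbinv, hy, hyinv]
    calc b * (b * a) * b = (b * b) * (a * b) := by group
      _ = a * b := by rw [hb, one_mul]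
  have conj_b : ∀ z ∈ H₁, b * z * b⁻¹ ∈ H₁ := by
    intro z hz
    induction hz using Subgroup.closure_induction with
    | mem w hw =>
      rw [hS] at hw
      rcases hw with rfl | rfl
      · rw [hbx]; exact inv_mem hxmem
      · rw [hby]; exact inv_mem hymem
    | one => simpa using one_mem H₁
    | mul u v _ _ hu hv =>
      have h : b * (u * v) * b⁻¹ = (b * u * b⁻¹) * (b * v * b⁻¹) := by group
      rw [h]; exact mul_mem hu hv
    | inv u _ hu =>
      have h : b * u⁻¹ * b⁻¹ = (b * u * b⁻¹)⁻¹ := by group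
      rw [h]; exact inv_mem hu
  have conj_b' : ∀ z ∈ H₁, b⁻¹ * z * b ∈ H₁ := by
    intro z hz
    have := conj_b z hz
    rwa [hbinv] at this ⊢
  -- the homomorphism to ZMod 2
  have hlift : ∀ r ∈ rels, FreeGroup.lift
      (fun _ : Fin 3 => (Multiplicative.ofAdd (1 : ZMod 2))) r = 1 := by
    intro r hr
    rcases hr with rfl | rfl | rfl | rfl <;> simp [sq, map_mul, ← ofAdd_add] <;> decide
  set φ : G₁ →* Multiplicative (ZMod 2) := PresentedGroup.toGroup hlift with hφ
  have hφa : φ a = Multiplicative.ofAdd 1 := PresentedGroup.toGroup.of hlift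
  have hφb : φ b = Multiplicative.ofAdd 1 := PresentedGroup.toGroup.of hlift
  have hφc : φ c = Multiplicative.ofAdd 1 := PresentedGroup.toGroup.of hlift
  have hH_le : H₁ ≤ φ.ker := by
    rw [Subgroup.closure_le, hS]
    intro z hz
    rcases hz with rfl | rfl
    · rw [SetLike.mem_coe, MonoidHom.mem_ker, hx, map_mul, hφb, hφc, ← ofAdd_add]
      decide
    · rw [SetLike.mem_coe, MonoidHom.mem_ker, hy, map_mul, hφb, hφa, ← ofAdd_add]
      decide
  -- every element is in H₁ or H₁ * b
  have hcover : ∀ g : G₁, g ∈ H₁ ∨ g * b ∈ H₁ := by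
    intro g
    let K : Subgroup G₁ :=
      { carrier := {g : G₁ | g ∈ H₁ ∨ g * b ∈ H₁}
        one_mem' := Or.inl (one_mem H₁)
        mul_mem' := by
          rintro u v (hu | hu) (hv | hv)
          · exact Or.inl (mul_mem hu hv)
          · right
            have h := mul_mem hu hv
            rwa [← mul_assoc u v b] at h
          · right
            have h : u * v * b = (u * b) * (b⁻¹ * v * b) := by group
            rw [h]; exact mul_mem hu (conj_b' v hv)
          · left
            have hbv : b * v ∈ H₁ := by
              have h := conj_b (v * b) hv
              rwa [show b * (v * b) * b⁻¹ = b * v by group] at h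
            have hbv' : b⁻¹ * v ∈ H₁ := by rw [hbinv]; exact hbv
            have h : u * v = (u * b) * (b⁻¹ * v) := by group
            rw [h]
            exact mul_mem hu hbv'
        inv_mem' := by
          rintro u (hu | hu)
          · exact Or.inl (inv_mem hu)
          · right
            have hbu : b * u ∈ H₁ := by
              have h := conj_b (u * b) hu
              rwa [show b * (u * b) * b⁻¹ = b * u by group] at h
            have h : u⁻¹ * b = (b * u)⁻¹ * (b * b) := by group
            rw [h, hb, mul_one]
            exact inv_mem hbu }
    have hgen : ∀ j : Fin 3, PresentedGroup.of j ∈ K := by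
      intro j
      fin_cases j
      · exact Or.inr (by show a * b ∈ H₁; rw [← hyinv]; exact inv_mem hymem)
      · exact Or.inr (by show b * b ∈ H₁; rw [hb]; exact one_mem H₁)
      · exact Or.inr (by show c * b ∈ H₁; rw [← hxinv]; exact inv_mem hxmem)
    exact PresentedGroup.generated_by rels K hgen g
  -- H₁ equals the kernel of φ, hence is normal
  have hker : H₁ = φ.ker := by
    refine le_antisymm hH_le ?_
    intro g hg
    rcases hcover g with h | h
    · exact h
    · exfalso
      have h1 : φ (g * b) = 1 := hH_le h
      rw [map_mul, hg, one_mul, hφb] at h1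
      exact absurd h1 (by decide)
  refine ⟨hker ▸ φ.normal_ker, ?_, ?_, ?_⟩
  · -- abelian
    intro u hu v hv
    show Commute u v
    induction hu using Subgroup.closure_induction with
    | mem w hw =>
      induction hv using Subgroup.closure_induction with
      | mem w' hw' =>
        rw [hS] at hw hw'
        rcases hw with rfl | rfl <;> rcases hw' with rfl | rfl
        · rfl
        · exact hcomm
        · exact hcomm.symm
        · rfl
      | one => exact Commute.one_right w
      | mul u' v' _ _ h1 h2 => exact Commute.mul_right h1 h2
      | inv u' _ h1 => exact Commute.inv_right h1
    | one => exact Commute.one_left v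
    | mul u' v' _ _ h1 h2 => exact Commute.mul_left h1 h2
    | inv u' _ h1 => exact Commute.inv_left h1
  · -- Nat.card ≤ 2
    have hsurj : Function.Surjective
        (fun t : Bool => if t then ((b : G₁) : G₁ ⧸ H₁) else ((1 : G₁) : G₁ ⧸ H₁)) := by
      intro q
      induction q using QuotientGroup.induction_on with
      | H g =>
        rcases hcover g with h | h
        · refine ⟨false, ?_⟩
          show ((1 : G₁) : G₁ ⧸ H₁) = (g : G₁ ⧸ H₁)
          refine QuotientGroup.eq.2 ?_
          rw [inv_one, one_mul]; exact h
        · refine ⟨true, ?_⟩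
          show ((b : G₁) : G₁ ⧸ H₁) = (g : G₁ ⧸ H₁)
          refine QuotientGroup.eq.2 ?_
          have hbg : b * g ∈ H₁ := by
            have hh := conj_b (g * b) h
            rwa [show b * (g * b) * b⁻¹ = b * g by group] at hh
          rwa [hbinv]
    calc Nat.card (G₁ ⧸ H₁) ≤ Nat.card Bool := Nat.card_le_card_of_surjective _ hsurj
      _ = 2 := by simp
  · -- every coset is 1 or b
    intro q
    induction q using QuotientGroup.induction_on with
    | H g =>
      rcases hcover g with h | h
      · left
        refine (QuotientGroup.eq.2 ?_).symm
        rw [inv_one, one_mul]; exact h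
      · right
        refine QuotientGroup.eq.2 ?_
        have h2 : g⁻¹ * b = (b * (g * b) * b⁻¹)⁻¹ * (b * b) := by group
        rw [h2, hb, mul_one]
        exact inv_mem (conj_b _ h)
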